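/- Let p be a positive integer, q ∈ (0,1), s > 0, t > 0, and let m be a positive integer. If m is odd then ψ_{p,q}^{(m+1)}(s+t) ≥ ψ_{p,q}^{(m+1)}(t), and if m is even then ψ_{p,q}^{(m+1)}(s+t) ≤ ψ_{p,q}^{(m+1)}(t). Equivalently, (ln q)^{m+2} ∑_{n=1}^{p} n^{m+1} q^{n t}(q^{n s} - 1)/(1 - q^n) is ≥ 0 when m is odd and ≤ 0 when m is even. -/

import Mathlib

open Finset

/-- The k-th derivative of the (p,q)-digamma function,
`ψ_{p,q}^{(k)}(t) = (ln q)^{k+1} ∑_{n=1}^p n^k q^{n t}/(1 - q^n)`. -/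
noncomputable def psiPQDeriv (p : ℕ) (q : ℝ) (k : ℕ) (t : ℝ) : ℝ :=
  (Real.log q) ^ (k + 1) *
    ∑ n ∈ Finset.Icc 1 p, (n : ℝ) ^ k * q ^ ((n : ℝ) * t) / (1 - q ^ n)

/-! Each term of `ψ_{p,q}^{(k)}(s + t) - ψ_{p,q}^{(k)}(t)` carries the factor `q^{ns} - 1 ≤ 0`
against the positive `n^k q^{nt} / (1 - q^n)`, so the difference is `(ln q)^{k+1}` times a
nonpositive sum; with `ln q < 0`, its sign is that of `(-1)^k`. -/

theorem psiPQDeriv_add_sub (p : ℕ) {q : ℝ} (hq : 0 < q) (k : ℕ) (s t : ℝ) :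
    psiPQDeriv p q k (s + t) - psiPQDeriv p q k t =
      Real.log q ^ (k + 1) * ∑ n ∈ Icc 1 p,
        (n : ℝ) ^ k * q ^ ((n : ℝ) * t) * (q ^ ((n : ℝ) * s) - 1) / (1 - q ^ n) := by
  simp only [psiPQDeriv, ← mul_sub, ← sum_sub_distrib]
  congr 1
  refine sum_congr rfl fun n _ => ?_
  rw [mul_add, Real.rpow_add hq]
  ring

theorem sum_pow_mul_rpow_mul_rpow_sub_one_div_nonpos (S : Finset ℕ) (k : ℕ) {q : ℝ}
    (hq₀ : 0 ≤ q) (hq₁ : q ≤ 1) {s : ℝ} (hs : 0 ≤ s) (t : ℝ) :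
    ∑ n ∈ S, (n : ℝ) ^ k * q ^ ((n : ℝ) * t) * (q ^ ((n : ℝ) * s) - 1) / (1 - q ^ n) ≤ 0 :=
  sum_nonpos fun _ _ => div_nonpos_of_nonpos_of_nonneg
    (mul_nonpos_of_nonneg_of_nonpos (by positivity)
      (sub_nonpos.2 (Real.rpow_le_one hq₀ hq₁ (by positivity))))
    (sub_nonneg.2 (pow_le_one₀ hq₀ hq₁))

theorem psiPQDeriv_succ_monotonicity_general (p : ℕ) (q : ℝ)
    (hq : q ∈ Set.Ioo (0 : ℝ) 1) (s t : ℝ) (hs : 0 < s)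
    (m : ℕ) :
    ((Odd m → psiPQDeriv p q (m + 1) (s + t) ≥ psiPQDeriv p q (m + 1) t) ∧
      (Even m → psiPQDeriv p q (m + 1) (s + t) ≤ psiPQDeriv p q (m + 1) t)) ∧
    ((Odd m →
        0 ≤ (Real.log q) ^ (m + 2) *
          ∑ n ∈ Finset.Icc 1 p,
            (n : ℝ) ^ (m + 1) * q ^ ((n : ℝ) * t) * (q ^ ((n : ℝ) * s) - 1) / (1 - q ^ n)) ∧
      (Even m →
        (Real.log q) ^ (m + 2) *
          ∑ n ∈ Finset.Icc 1 p,
            (n : ℝ) ^ (m + 1) * q ^ ((n : ℝ) * t) * (q ^ ((n : ℝ) * s) - 1) / (1 - q ^ n) ≤ 0)) := by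
  obtain ⟨hq₀, hq₁⟩ := hq
  have hdiff : _ = Real.log q ^ (m + 2) * _ := psiPQDeriv_add_sub p hq₀ (m + 1) s t
  have hsum := sum_pow_mul_rpow_mul_rpow_sub_one_div_nonpos (Icc 1 p) (m + 1) hq₀.le hq₁.le hs.le t
  have hlog : Real.log q ≤ 0 := Real.log_nonpos hq₀.le hq₁.le
  have hodd (hm : Odd m) := mul_nonneg_of_nonpos_of_nonpos
    ((hm.add_even even_two).pow_nonpos hlog) hsum
  have heven (hm : Even m) := mul_nonpos_of_nonneg_of_nonpos
    ((hm.add even_two).pow_nonneg (Real.log q)) hsum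
  refine ⟨⟨fun hm => ?_, fun hm => ?_⟩, hodd, heven⟩
  · linarith [hodd hm]
  · linarith [heven hm]

theorem psiPQDeriv_succ_monotonicity (p : ℕ) (hp : 0 < p) (q : ℝ)
    (hq : q ∈ Set.Ioo (0 : ℝ) 1) (s t : ℝ) (hs : 0 < s) (ht : 0 < t)
    (m : ℕ) (hm : 0 < m) :
    ((Odd m → psiPQDeriv p q (m + 1) (s + t) ≥ psiPQDeriv p q (m + 1) t) ∧
      (Even m → psiPQDeriv p q (m + 1) (s + t) ≤ psiPQDeriv p q (m + 1) t)) ∧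
    ((Odd m →
        0 ≤ (Real.log q) ^ (m + 2) *
          ∑ n ∈ Finset.Icc 1 p,
            (n : ℝ) ^ (m + 1) * q ^ ((n : ℝ) * t) * (q ^ ((n : ℝ) * s) - 1) / (1 - q ^ n)) ∧
      (Even m →
        (Real.log q) ^ (m + 2) *
          ∑ n ∈ Finset.Icc 1 p,
            (n : ℝ) ^ (m + 1) * q ^ ((n : ℝ) * t) * (q ^ ((n : ℝ) * s) - 1) / (1 - q ^ n) ≤ 0)) :=
  psiPQDeriv_succ_monotonicity_general p q hq s t hs m
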